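/- arXiv:2506.18912 — 5 statements merged into one kernel-verified Lean document; each statement's English description precedes it below -/
import Mathlib

section
/- Let a > 0, let j be an integer, and let N ≥ 1 be an integer. Let h : ℝ → ℝ be N times continuously differentiable with h^{(N)} bounded. Let κ₁ : ℝ → ℝ be bounded, nonnegative, vanish outside [−a, a], and satisfy Σ_{k∈ℤ} κ₁(x − k) = 1 for all x ∈ ℝ. Let χ₂ : ℝ → ℝ be integrable, nonnegative, vanish outside [−a, a], and satisfy ∫_ℝ χ₂(v) dv = 1. Then for every t ∈ ℝ, |(W_j h)(t) − h(t)| ≤ Σ_{i=1}^{N} (|h^{(i)}(t)|/i!) · (2a/2^j)^i + ((2a/2^j)^N / N!) · ω(h^{(N)}, 2a/2^j). -/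
open MeasureTheory

/-- The wavelet-based sampling Kantorovich operator
`(W_j h)(t) = 2^j · Σ_{k∈ℤ} κ₁(2^j t − k) · ∫_ℝ h(u) χ₂(2^j u − k) du`. -/
noncomputable def W (j : ℤ) (κ₁ χ₂ h : ℝ → ℝ) (t : ℝ) : ℝ :=
  (2 : ℝ) ^ j *
    ∑' k : ℤ, κ₁ ((2 : ℝ) ^ j * t - k) * ∫ u : ℝ, h u * χ₂ ((2 : ℝ) ^ j * u - k)

/-- The modulus of continuity `ω(g, δ) = sup{|g x − g y| : |x − y| ≤ δ}`. -/
noncomputable def modCont (g : ℝ → ℝ) (δ : ℝ) : ℝ :=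
  sSup {d : ℝ | ∃ x y : ℝ, |x - y| ≤ δ ∧ d = |g x - g y|}

open Set

private lemma iDW_eq {n m : ℕ} {f : ℝ → ℝ} {s : Set ℝ}
    (hf : ContDiff ℝ (n : ℕ∞) f) (hm : m ≤ n) (hs : UniqueDiffOn ℝ s) {x : ℝ} (hx : x ∈ s) :
    iteratedDerivWithin m f s x = iteratedDeriv m f x := by
  have h1 : HasFTaylorSeriesUpToOn (m : ℕ∞) f (ftaylorSeries ℝ f) s :=
    ((contDiff_iff_ftaylorSeries.mp (hf.of_le (by exact_mod_cast hm))).hasFTaylorSeriesUpToOn s)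
  have h2 := h1.eq_iteratedFDerivWithin_of_uniqueDiffOn le_rfl hs hx
  rw [iteratedDerivWithin_eq_iteratedFDerivWithin, iteratedDeriv_eq_iteratedFDeriv, ← h2]
  rfl

/-- Symmetric Taylor theorem with Lagrange remainder, around `t`, valid for `u` on either side. -/
private lemma taylor_sym {n : ℕ} {h : ℝ → ℝ} (hh : ContDiff ℝ (n + 1 : ℕ) h) (t u : ℝ) :
    ∃ ξ : ℝ, |ξ - t| ≤ |u - t| ∧
      h u - ∑ i ∈ Finset.range (n + 1),
          ((i.factorial : ℝ)⁻¹ * (u - t) ^ i) * iteratedDeriv i h t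
        = iteratedDeriv (n + 1) h ξ * (u - t) ^ (n + 1) / (n + 1).factorial := by
  rcases lt_trichotomy t u with htu | rfl | htu
  · -- case t < u : apply Taylor directly
    have hcd : ContDiffOn ℝ n h (Icc t u) := (hh.of_le (by exact_mod_cast n.le_succ)).contDiffOn
    have hdiff : DifferentiableOn ℝ (iteratedDerivWithin n h (Icc t u)) (Ioo t u) := by
      apply DifferentiableOn.congr
        ((hh.differentiable_iteratedDeriv n (by exact_mod_cast n.lt_succ_self)).differentiableOn)
      exact fun x hx => iDW_eq hh n.le_succ (uniqueDiffOn_Icc htu) (Ioo_subset_Icc_self hx)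
    obtain ⟨ξ, hξ, heq⟩ := by
      have := taylor_mean_remainder_lagrange htu.ne (by rwa [uIcc_of_le htu.le])
        (by rwa [uIcc_of_le htu.le, uIoo_of_lt htu])
      rw [uIcc_of_le htu.le, uIoo_of_lt htu] at this
      exact this
    refine ⟨ξ, ?_, ?_⟩
    · rw [abs_of_pos (sub_pos.mpr hξ.1), abs_of_pos (sub_pos.mpr htu)]
      linarith [hξ.2]
    · rw [taylor_within_apply] at heq
      have hrw : ∀ i ∈ Finset.range (n + 1),
          ((i.factorial : ℝ)⁻¹ * (u - t) ^ i) • iteratedDerivWithin i h (Icc t u) t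
            = ((i.factorial : ℝ)⁻¹ * (u - t) ^ i) * iteratedDeriv i h t := by
        intro i hi
        rw [iDW_eq hh ((Nat.le_of_lt_succ (Finset.mem_range.mp hi)).trans n.le_succ)
          (uniqueDiffOn_Icc htu) (left_mem_Icc.mpr htu.le), smul_eq_mul]
      rw [Finset.sum_congr rfl hrw] at heq
      rw [heq, iDW_eq hh le_rfl (uniqueDiffOn_Icc htu) (Ioo_subset_Icc_self hξ)]
  · -- case u = t
    refine ⟨t, by simp, ?_⟩
    have : ∑ i ∈ Finset.range (n + 1),
        ((i.factorial : ℝ)⁻¹ * (t - t) ^ i) * iteratedDeriv i h t = h t := by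
      rw [Finset.sum_eq_single 0]
      · simp
      · intro i _ hi
        simp [sub_self, zero_pow hi]
      · simp
    rw [this]; simp
  · -- case u < t : reflect
    set H : ℝ → ℝ := fun x => h (u + t + -x) with hH
    have hHcd : ContDiff ℝ (n + 1 : ℕ) H :=
      hh.comp ((contDiff_const.add contDiff_id.neg))
    have hHiter : ∀ m : ℕ, ∀ x : ℝ,
        iteratedDeriv m H x = (-1 : ℝ) ^ m * iteratedDeriv m h (u + t + -x) := by
      intro m x
      have e1 : H = (fun z => h (u + t + z)) ∘ (fun x => -x) := by
        funext z; simp [hH]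
      rw [e1]
      have := iteratedDeriv_comp_neg m (fun z => h (u + t + z)) x
      simp only [Function.comp_def] at this ⊢
      rw [this, iteratedDeriv_comp_const_add m h (u + t)]
      simp [smul_eq_mul]
    have hcd : ContDiffOn ℝ n H (Icc u t) := (hHcd.of_le (by exact_mod_cast n.le_succ)).contDiffOn
    have hdiff : DifferentiableOn ℝ (iteratedDerivWithin n H (Icc u t)) (Ioo u t) := by
      apply DifferentiableOn.congr
        ((hHcd.differentiable_iteratedDeriv n (by exact_mod_cast n.lt_succ_self)).differentiableOn)
      exact fun x hx => iDW_eq hHcd n.le_succ (uniqueDiffOn_Icc htu) (Ioo_subset_Icc_self hx)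
    obtain ⟨ξ', hξ', heq⟩ := by
      have := taylor_mean_remainder_lagrange htu.ne (by rwa [uIcc_of_le htu.le])
        (by rwa [uIcc_of_le htu.le, uIoo_of_lt htu])
      rw [uIcc_of_le htu.le, uIoo_of_lt htu] at this
      exact this
    refine ⟨u + t + -ξ', ?_, ?_⟩
    · rw [abs_of_neg (by linarith [hξ'.1, hξ'.2] : u + t + -ξ' - t < 0),
        abs_of_neg (sub_neg.mpr htu)]
      linarith [hξ'.2]
    · rw [taylor_within_apply] at heq
      have hrw : ∀ i ∈ Finset.range (n + 1),
          ((i.factorial : ℝ)⁻¹ * (t - u) ^ i) • iteratedDerivWithin i H (Icc u t) u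
            = ((i.factorial : ℝ)⁻¹ * (u - t) ^ i) * iteratedDeriv i h t := by
        intro i hi
        rw [iDW_eq hHcd ((Nat.le_of_lt_succ (Finset.mem_range.mp hi)).trans n.le_succ)
          (uniqueDiffOn_Icc htu) (left_mem_Icc.mpr htu.le), smul_eq_mul, hHiter i u,
          show u + t + -u = t from by ring]
        have hsign : ((-1:ℝ)) ^ i * (t - u) ^ i = (u - t) ^ i := by
          rw [← mul_pow]; ring_nf
        linear_combination ((i.factorial : ℝ)⁻¹ * iteratedDeriv i h t) * hsign
      rw [Finset.sum_congr rfl hrw] at heq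
      have hHt : H t = h u := by simp [hH]
      rw [hHt] at heq
      rw [heq, iDW_eq hHcd le_rfl (uniqueDiffOn_Icc htu) (Ioo_subset_Icc_self hξ'),
        hHiter (n + 1) ξ']
      have hsign : ((-1:ℝ)) ^ (n+1) * (t - u) ^ (n+1) = (u - t) ^ (n+1) := by
        rw [← mul_pow]; ring_nf
      have hfac : ((n+1).factorial : ℝ) ≠ 0 := Nat.cast_ne_zero.mpr (n+1).factorial_ne_zero
      field_simp
      linear_combination (iteratedDeriv (n+1) h (u + t + -ξ')) * hsign

private lemma taylor_abs_bound {N : ℕ} (hN : 1 ≤ N) {h : ℝ → ℝ} (hh : ContDiff ℝ (N : ℕ) h)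
    {M : ℝ} (hbd : ∀ x, |iteratedDeriv N h x| ≤ M)
    {δ : ℝ} (t u : ℝ) (hu : |u - t| ≤ δ) :
    |h u - h t| ≤ (∑ i ∈ Finset.Icc 1 N, |iteratedDeriv i h t| / i.factorial * δ ^ i)
      + δ ^ N / N.factorial * modCont (iteratedDeriv N h) δ := by
  obtain ⟨n, rfl⟩ : ∃ n, N = n + 1 := ⟨N - 1, (Nat.succ_pred_eq_of_pos hN).symm⟩
  obtain ⟨ξ, hξ, heq⟩ := taylor_sym hh t u
  have hbdd : BddAbove {d : ℝ | ∃ x y : ℝ, |x - y| ≤ δ ∧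
      d = |iteratedDeriv (n+1) h x - iteratedDeriv (n+1) h y|} := by
    refine ⟨2 * M, fun d hd => ?_⟩
    obtain ⟨x, y, -, rfl⟩ := hd
    calc |iteratedDeriv (n+1) h x - iteratedDeriv (n+1) h y|
        ≤ |iteratedDeriv (n+1) h x| + |iteratedDeriv (n+1) h y| := abs_sub _ _
      _ ≤ 2 * M := by linarith [hbd x, hbd y]
  have hmem : |iteratedDeriv (n+1) h ξ - iteratedDeriv (n+1) h t|
      ≤ modCont (iteratedDeriv (n+1) h) δ :=
    le_csSup hbdd ⟨ξ, t, hξ.trans hu, rfl⟩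
  have hωnn : 0 ≤ modCont (iteratedDeriv (n+1) h) δ := (abs_nonneg _).trans hmem
  have hδ : 0 ≤ δ := (abs_nonneg _).trans hu
  have hfacpos : (0:ℝ) < ((n+1).factorial : ℝ) := Nat.cast_pos.mpr (Nat.factorial_pos _)
  have hsum : ∑ i ∈ Finset.range (n+1), ((i.factorial:ℝ)⁻¹ * (u-t)^i) * iteratedDeriv i h t
      = h t + ∑ i ∈ Finset.Icc 1 n, ((i.factorial:ℝ)⁻¹ * (u-t)^i) * iteratedDeriv i h t := by
    rw [Finset.range_eq_Ico, Finset.sum_eq_sum_Ico_succ_bot (Nat.succ_pos n)]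
    simp [Finset.Ico_add_one_right_eq_Icc]
  have key : h u - h t =
      (∑ i ∈ Finset.Icc 1 n, ((i.factorial:ℝ)⁻¹ * (u-t)^i) * iteratedDeriv i h t)
      + iteratedDeriv (n+1) h t * (u-t)^(n+1) / (n+1).factorial
      + (iteratedDeriv (n+1) h ξ - iteratedDeriv (n+1) h t) * (u-t)^(n+1) / (n+1).factorial := by
    rw [hsum] at heq
    linear_combination heq
  have T1 : |∑ i ∈ Finset.Icc 1 n, ((i.factorial:ℝ)⁻¹ * (u-t)^i) * iteratedDeriv i h t|
      ≤ ∑ i ∈ Finset.Icc 1 n, |iteratedDeriv i h t| / i.factorial * δ ^ i := by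
    refine (Finset.abs_sum_le_sum_abs _ _).trans (Finset.sum_le_sum fun i _ => ?_)
    have e : |((i.factorial:ℝ)⁻¹ * (u-t)^i) * iteratedDeriv i h t|
        = |iteratedDeriv i h t| / i.factorial * |u-t|^i := by
      rw [abs_mul, abs_mul, abs_inv, abs_pow, Nat.abs_cast]; ring
    rw [e]
    exact mul_le_mul_of_nonneg_left (pow_le_pow_left₀ (abs_nonneg _) hu i) (by positivity)
  have T2 : |iteratedDeriv (n+1) h t * (u-t)^(n+1) / (n+1).factorial|
      ≤ |iteratedDeriv (n+1) h t| / (n+1).factorial * δ ^ (n+1) := by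
    have e : |iteratedDeriv (n+1) h t * (u-t)^(n+1) / (n+1).factorial|
        = |iteratedDeriv (n+1) h t| / (n+1).factorial * |u-t|^(n+1) := by
      rw [abs_div, abs_mul, abs_pow, Nat.abs_cast]; ring
    rw [e]
    exact mul_le_mul_of_nonneg_left (pow_le_pow_left₀ (abs_nonneg _) hu _) (by positivity)
  have T3 : |(iteratedDeriv (n+1) h ξ - iteratedDeriv (n+1) h t) * (u-t)^(n+1) / (n+1).factorial|
      ≤ δ ^ (n+1) / (n+1).factorial * modCont (iteratedDeriv (n+1) h) δ := by
    have e : |(iteratedDeriv (n+1) h ξ - iteratedDeriv (n+1) h t) * (u-t)^(n+1) / (n+1).factorial|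
        = |iteratedDeriv (n+1) h ξ - iteratedDeriv (n+1) h t| * |u-t|^(n+1)
          / (n+1).factorial := by
      rw [abs_div, abs_mul, abs_pow, Nat.abs_cast]
    have h1 : |iteratedDeriv (n+1) h ξ - iteratedDeriv (n+1) h t| * |u-t|^(n+1)
        ≤ modCont (iteratedDeriv (n+1) h) δ * δ ^ (n+1) :=
      mul_le_mul hmem (pow_le_pow_left₀ (abs_nonneg _) hu _)
        (pow_nonneg (abs_nonneg _) _) hωnn
    calc |(iteratedDeriv (n+1) h ξ - iteratedDeriv (n+1) h t) * (u-t)^(n+1) / (n+1).factorial|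
        = |iteratedDeriv (n+1) h ξ - iteratedDeriv (n+1) h t| * |u-t|^(n+1)
          / (n+1).factorial := e
      _ ≤ modCont (iteratedDeriv (n+1) h) δ * δ ^ (n+1) / (n+1).factorial :=
          (div_le_div_iff_of_pos_right hfacpos).mpr h1
      _ = δ ^ (n+1) / (n+1).factorial * modCont (iteratedDeriv (n+1) h) δ := by ring
  have hsplit : ∑ i ∈ Finset.Icc 1 (n+1), |iteratedDeriv i h t| / i.factorial * δ ^ i
      = (∑ i ∈ Finset.Icc 1 n, |iteratedDeriv i h t| / i.factorial * δ ^ i)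
        + |iteratedDeriv (n+1) h t| / (n+1).factorial * δ ^ (n+1) :=
    Finset.sum_Icc_succ_top (Nat.succ_le_succ (Nat.zero_le n)) _
  rw [key, hsplit]
  refine ((abs_add_le _ _).trans (add_le_add (abs_add_le _ _) le_rfl)).trans ?_
  exact add_le_add (add_le_add T1 T2) T3

theorem wavelet_kantorovich_taylor_estimate
    (a : ℝ) (ha : 0 < a) (j : ℤ) (N : ℕ) (hN : 1 ≤ N)
    (h κ₁ χ₂ : ℝ → ℝ)
    (hh : ContDiff ℝ N h)
    (hhbd : ∃ M : ℝ, ∀ x : ℝ, |iteratedDeriv N h x| ≤ M)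
    (hκbd : ∃ M : ℝ, ∀ x : ℝ, |κ₁ x| ≤ M)
    (hκnn : ∀ x : ℝ, 0 ≤ κ₁ x)
    (hκsupp : ∀ x : ℝ, x ∉ Set.Icc (-a) a → κ₁ x = 0)
    (hκsum : ∀ x : ℝ, ∑' k : ℤ, κ₁ (x - k) = 1)
    (hχint : Integrable χ₂)
    (hχnn : ∀ x : ℝ, 0 ≤ χ₂ x)
    (hχsupp : ∀ x : ℝ, x ∉ Set.Icc (-a) a → χ₂ x = 0)
    (hχone : (∫ v : ℝ, χ₂ v) = 1)
    (t : ℝ) :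
    |W j κ₁ χ₂ h t - h t| ≤
      (∑ i ∈ Finset.Icc 1 N,
          |iteratedDeriv i h t| / (Nat.factorial i) * (2 * a / (2 : ℝ) ^ j) ^ i)
        + (2 * a / (2 : ℝ) ^ j) ^ N / (Nat.factorial N)
          * modCont (iteratedDeriv N h) (2 * a / (2 : ℝ) ^ j) := by
  obtain ⟨Mh, hMh⟩ := hhbd
  set c : ℝ := (2:ℝ)^j with hc
  have hc0 : (0:ℝ) < c := zpow_pos (by norm_num) j
  set δ : ℝ := 2 * a / c with hδdef
  have hδ0 : (0:ℝ) < δ := by positivity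
  set B : ℝ := (∑ i ∈ Finset.Icc 1 N, |iteratedDeriv i h t| / (Nat.factorial i) * δ ^ i)
      + δ ^ N / (Nat.factorial N) * modCont (iteratedDeriv N h) δ with hB
  -- integrability of the kernel pieces
  have hψint : ∀ k : ℤ, Integrable (fun u : ℝ => χ₂ (c * u - k)) := by
    intro k
    have h1 : Integrable (fun v : ℝ => χ₂ (v - k)) := hχint.comp_sub_right (k : ℝ)
    exact (integrable_comp_mul_left_iff (fun v : ℝ => χ₂ (v - (k:ℝ))) hc0.ne').mpr h1
  have hψvol : ∀ k : ℤ, (∫ u : ℝ, χ₂ (c * u - k)) = c⁻¹ := by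
    intro k
    rw [MeasureTheory.Measure.integral_comp_mul_left (fun v : ℝ => χ₂ (v - (k:ℝ))) c,
      integral_sub_right_eq_self χ₂ ((k:ℝ)), hχone,
      abs_of_pos (inv_pos.mpr hc0), smul_eq_mul, mul_one]
  have hint1 : ∀ k : ℤ, Integrable (fun u : ℝ => h u * χ₂ (c * u - k)) := by
    intro k
    obtain ⟨C, hC⟩ := (isCompact_Icc (a := ((k:ℝ) - a)/c) (b := ((k:ℝ) + a)/c)
      ).exists_bound_of_continuousOn hh.continuous.continuousOn
    refine Integrable.mono ((hψint k).const_mul C)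
      (hh.continuous.aestronglyMeasurable.mul (hψint k).aestronglyMeasurable)
      (Filter.Eventually.of_forall fun u => ?_)
    by_cases hu : c * u - k ∈ Set.Icc (-a) a
    · have hu' : u ∈ Set.Icc (((k:ℝ) - a)/c) (((k:ℝ) + a)/c) := by
        simp only [Set.mem_Icc] at hu ⊢
        constructor
        · rw [div_le_iff₀ hc0]; nlinarith [hu.1]
        · rw [le_div_iff₀ hc0]; nlinarith [hu.2]
      have hCu := hC u hu'
      rw [Real.norm_eq_abs] at hCu
      calc ‖h u * χ₂ (c*u - k)‖ = |h u| * χ₂ (c*u - k) := by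
            rw [Real.norm_eq_abs, abs_mul, abs_of_nonneg (hχnn _)]
        _ ≤ C * χ₂ (c*u - k) := mul_le_mul_of_nonneg_right hCu (hχnn _)
        _ ≤ ‖C * χ₂ (c*u - k)‖ := le_abs_self _
    · rw [hχsupp _ hu]; simp
  have hint2 : ∀ k : ℤ, Integrable (fun u : ℝ => (h u - h t) * χ₂ (c * u - k)) := by
    intro k
    have := (hint1 k).sub ((hψint k).const_mul (h t))
    simpa [sub_mul, Pi.sub_def] using this
  have hgval : ∀ k : ℤ, (∫ u : ℝ, h u * χ₂ (c*u - k))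
      = (∫ u : ℝ, (h u - h t) * χ₂ (c*u - k)) + h t * c⁻¹ := by
    intro k
    have e1 : (fun u : ℝ => (h u - h t) * χ₂ (c*u - k))
        = fun u : ℝ => h u * χ₂ (c*u - k) - h t * χ₂ (c*u - k) := by
      funext u; ring
    rw [e1, integral_sub (hint1 k) ((hψint k).const_mul (h t)),
      MeasureTheory.integral_const_mul, hψvol k]
    ring
  -- bound on the moment when κ₁ is nonzero
  have hgbd : ∀ k : ℤ, κ₁ (c*t - k) ≠ 0 →
      |∫ u : ℝ, (h u - h t) * χ₂ (c*u - k)| ≤ B * c⁻¹ := by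
    intro k hk
    have hkt : |c*t - k| ≤ a := by
      by_contra hcon
      refine hk (hκsupp _ fun hmem => hcon ?_)
      simp only [Set.mem_Icc] at hmem
      exact abs_le.mpr hmem
    have hptwise : ∀ u : ℝ, ‖(h u - h t) * χ₂ (c*u - k)‖ ≤ B * χ₂ (c*u - k) := by
      intro u
      by_cases hu : c * u - k ∈ Set.Icc (-a) a
      · have hut : |u - t| ≤ δ := by
          simp only [Set.mem_Icc] at hu
          have h1 : |c*u - c*t| ≤ 2*a := by
            have e : c*u - c*t = (c*u - k) - (c*t - k) := by ring
            rw [e]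
            refine (abs_sub _ _).trans ?_
            have := abs_le.mpr hu
            linarith [hkt]
          have h2 : c * |u - t| ≤ 2*a := by
            have e2 : c * |u - t| = |c*u - c*t| := by
              rw [show c*u - c*t = c*(u-t) from by ring, abs_mul, abs_of_pos hc0]
            linarith [e2 ▸ h1]
          rw [hδdef, le_div_iff₀ hc0]
          linarith
        have hb := taylor_abs_bound hN hh hMh t u hut
        calc ‖(h u - h t) * χ₂ (c*u - k)‖ = |h u - h t| * χ₂ (c*u - k) := by
              rw [Real.norm_eq_abs, abs_mul, abs_of_nonneg (hχnn _)]
          _ ≤ B * χ₂ (c*u - k) := mul_le_mul_of_nonneg_right (by exact hb) (hχnn _)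
      · rw [hχsupp _ hu]; simp
    have hnorm := norm_integral_le_of_norm_le ((hψint k).const_mul B)
      (Filter.Eventually.of_forall hptwise)
    calc |∫ u : ℝ, (h u - h t) * χ₂ (c*u - k)|
        = ‖∫ u : ℝ, (h u - h t) * χ₂ (c*u - k)‖ := (Real.norm_eq_abs _).symm
      _ ≤ ∫ u : ℝ, B * χ₂ (c*u - k) := hnorm
      _ = B * c⁻¹ := by rw [MeasureTheory.integral_const_mul, hψvol k]
  -- summability facts
  have hκsummable : Summable (fun k : ℤ => κ₁ (c*t - k)) := by
    by_contra hcon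
    have h1 := hκsum (c*t)
    rw [tsum_eq_zero_of_not_summable hcon] at h1
    norm_num at h1
  have hpt : ∀ k : ℤ, ‖κ₁ (c*t - k) * (∫ u : ℝ, (h u - h t) * χ₂ (c*u - k))‖
      ≤ κ₁ (c*t - k) * (B * c⁻¹) := by
    intro k
    by_cases hk : κ₁ (c*t - k) = 0
    · rw [hk]
      simp only [zero_mul, norm_zero]
      positivity
    · rw [Real.norm_eq_abs, abs_mul, abs_of_nonneg (hκnn _)]
      exact mul_le_mul_of_nonneg_left (hgbd k hk) (hκnn _)
  have habs : Summable (fun k : ℤ =>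
      ‖κ₁ (c*t - k) * (∫ u : ℝ, (h u - h t) * χ₂ (c*u - k))‖) :=
    Summable.of_nonneg_of_le (fun k => norm_nonneg _) hpt (hκsummable.mul_right (B * c⁻¹))
  have hsummable2 : Summable (fun k : ℤ =>
      κ₁ (c*t - k) * (∫ u : ℝ, (h u - h t) * χ₂ (c*u - k))) := habs.of_norm
  have hκone : ∑' k : ℤ, κ₁ (c*t - (k : ℝ)) = 1 := hκsum (c*t)
  have hW : W j κ₁ χ₂ h t - h t
      = c * ∑' k : ℤ, κ₁ (c*t - k) * (∫ u : ℝ, (h u - h t) * χ₂ (c*u - k)) := by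
    have e : (fun k : ℤ => κ₁ (c*t - k) * ∫ u : ℝ, h u * χ₂ (c*u - k))
        = fun k : ℤ => κ₁ (c*t - k) * (∫ u : ℝ, (h u - h t) * χ₂ (c*u - k))
          + κ₁ (c*t - k) * (h t * c⁻¹) := by
      funext k; rw [hgval k]; ring
    have eW : W j κ₁ χ₂ h t
        = c * ∑' k : ℤ, κ₁ (c*t - k) * ∫ u : ℝ, h u * χ₂ (c*u - k) := rfl
    rw [eW, e, Summable.tsum_add hsummable2 (hκsummable.mul_right (h t * c⁻¹)), tsum_mul_right, hκone,
      one_mul, mul_add, mul_comm (h t), ← mul_assoc, mul_inv_cancel₀ hc0.ne', one_mul]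
    ring
  rw [hW]
  have hfinal : |∑' k : ℤ, κ₁ (c*t - k) * (∫ u : ℝ, (h u - h t) * χ₂ (c*u - k))| ≤ B * c⁻¹ := by
    calc |∑' k : ℤ, κ₁ (c*t - k) * (∫ u : ℝ, (h u - h t) * χ₂ (c*u - k))|
        ≤ ∑' k : ℤ, ‖κ₁ (c*t - k) * (∫ u : ℝ, (h u - h t) * χ₂ (c*u - k))‖ :=
          norm_tsum_le_tsum_norm habs
      _ ≤ ∑' k : ℤ, κ₁ (c*t - k) * (B * c⁻¹) :=
          Summable.tsum_le_tsum hpt habs (hκsummable.mul_right _)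
      _ = 1 * (B * c⁻¹) := by rw [tsum_mul_right, hκone]
      _ = B * c⁻¹ := one_mul _
  calc |c * ∑' k : ℤ, κ₁ (c*t - k) * (∫ u : ℝ, (h u - h t) * χ₂ (c*u - k))|
      = c * |∑' k : ℤ, κ₁ (c*t - k) * (∫ u : ℝ, (h u - h t) * χ₂ (c*u - k))| := by
        rw [abs_mul, abs_of_pos hc0]
    _ ≤ c * (B * c⁻¹) := mul_le_mul_of_nonneg_left hfinal hc0.le
    _ = B := by rw [mul_comm B, ← mul_assoc, mul_inv_cancel₀ hc0.ne', one_mul]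
end

section
/- Let a > 0 and let N ≥ 1 be an integer. Let h : ℝ → ℝ be N times continuously differentiable with h^{(N)} bounded and uniformly continuous. Let κ₁ : ℝ → ℝ be bounded, nonnegative, vanish outside [−a, a], and satisfy Σ_{k∈ℤ} κ₁(x − k) = 1 for all x ∈ ℝ. Let χ₂ : ℝ → ℝ be integrable, nonnegative, vanish outside [−a, a], with ∫_ℝ χ₂(v) dv = 1. Then for every t ∈ ℝ, (W_j h)(t) → h(t) as j → +∞. -/
open MeasureTheory


lemma integrable_mul_chi (a : ℝ) (χ₂ : ℝ → ℝ) (hχint : Integrable χ₂)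
    (hχnn : ∀ x, 0 ≤ χ₂ x) (hχsupp : ∀ x, x ∉ Set.Icc (-a) a → χ₂ x = 0)
    (f : ℝ → ℝ) (hf : Continuous f) : Integrable (fun v => f v * χ₂ v) := by
  obtain ⟨C, hC⟩ := (isCompact_Icc (a := -a) (b := a)).exists_bound_of_continuousOn
    hf.continuousOn
  refine (hχint.const_mul C).mono (hf.aestronglyMeasurable.mul hχint.aestronglyMeasurable) ?_
  filter_upwards with v
  by_cases hv : v ∈ Set.Icc (-a) a
  · have h1 : ‖f v‖ ≤ C := hC v hv
    have hC0 : 0 ≤ C := le_trans (norm_nonneg _) h1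
    rw [Real.norm_eq_abs (C * χ₂ v), abs_of_nonneg (mul_nonneg hC0 (hχnn v)), norm_mul,
      Real.norm_eq_abs (χ₂ v), abs_of_nonneg (hχnn v)]
    exact mul_le_mul_of_nonneg_right h1 (hχnn v)
  · simp [hχsupp v hv, norm_nonneg]

lemma sub_int_aux (χ₂ h : ℝ → ℝ) (c : ℝ) (hc : 0 < c) (k : ℝ) :
    c * ∫ u : ℝ, h u * χ₂ (c * u - k) = ∫ v : ℝ, h ((v + k) / c) * χ₂ v := by
  set G : ℝ → ℝ := fun y => h ((y + k) / c) * χ₂ y with hG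
  have key : (fun u : ℝ => h u * χ₂ (c * u - k)) = fun u => G (c * u - k) := by
    funext u
    have h2 : (c * u - k + k) / c = u := by field_simp; ring
    show h u * χ₂ (c * u - k) = h ((c * u - k + k) / c) * χ₂ (c * u - k)
    rw [h2]
  rw [key]
  have h1 : (fun u : ℝ => G (c * u - k)) = fun u => (fun y => G (y - k)) (c * u) := rfl
  rw [h1, MeasureTheory.Measure.integral_comp_mul_left (fun y => G (y - k)) c,
    integral_sub_right_eq_self G (k : ℝ), abs_of_pos (inv_pos.2 hc), smul_eq_mul,
    ← mul_assoc, mul_inv_cancel₀ hc.ne', one_mul]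

theorem wavelet_kantorovich_pointwise_convergence
    (a : ℝ) (ha : 0 < a) (N : ℕ) (hN : 1 ≤ N)
    (h κ₁ χ₂ : ℝ → ℝ)
    (hh : ContDiff ℝ N h)
    (hhbd : ∃ M : ℝ, ∀ x : ℝ, |iteratedDeriv N h x| ≤ M)
    (hhuc : UniformContinuous (iteratedDeriv N h))
    (hκbd : ∃ M : ℝ, ∀ x : ℝ, |κ₁ x| ≤ M)
    (hκnn : ∀ x : ℝ, 0 ≤ κ₁ x)
    (hκsupp : ∀ x : ℝ, x ∉ Set.Icc (-a) a → κ₁ x = 0)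
    (hκsum : ∀ x : ℝ, ∑' k : ℤ, κ₁ (x - k) = 1)
    (hχint : Integrable χ₂)
    (hχnn : ∀ x : ℝ, 0 ≤ χ₂ x)
    (hχsupp : ∀ x : ℝ, x ∉ Set.Icc (-a) a → χ₂ x = 0)
    (hχone : (∫ v : ℝ, χ₂ v) = 1)
    (t : ℝ) :
    Filter.Tendsto (fun j : ℤ => W j κ₁ χ₂ h t) Filter.atTop (nhds (h t)) := by
  have hcont : Continuous h := hh.continuous
  rw [Metric.tendsto_atTop]
  intro ε hε
  -- continuity at t
  obtain ⟨δ, hδpos, hδ⟩ := Metric.continuousAt_iff.mp (hcont.continuousAt (x := t)) (ε / 2)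
    (half_pos hε)
  -- choose n with 2a/2^n < δ
  obtain ⟨n, hn⟩ := pow_unbounded_of_one_lt (2 * a / δ) (one_lt_two (α := ℝ))
  have h2a : 2 * a / (2 : ℝ) ^ n < δ := by
    rw [div_lt_iff₀ (by positivity)] at hn ⊢
    nlinarith [pow_pos (zero_lt_two (α := ℝ)) n]
  refine ⟨(n : ℤ), fun j hj => ?_⟩
  set c : ℝ := (2 : ℝ) ^ j with hcdef
  have hc : (0 : ℝ) < c := zpow_pos zero_lt_two j
  have hcn : (2 : ℝ) ^ n ≤ c := by
    rw [hcdef, ← zpow_natCast (2 : ℝ) n]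
    exact zpow_le_zpow_right₀ one_le_two hj
  have hdc : 2 * a / c < δ :=
    lt_of_le_of_lt (div_le_div_of_nonneg_left (by linarith) (by positivity) hcn) h2a
  set b : ℝ := c * t with hbdef
  -- finite support
  set s : Finset ℤ := Finset.Icc ⌈b - a⌉ ⌊b + a⌋ with hsdef
  have hzero : ∀ k : ℤ, k ∉ s → κ₁ (b - k) = 0 := by
    intro k hk
    apply hκsupp
    intro hmem
    apply hk
    rw [hsdef, Finset.mem_Icc]
    obtain ⟨h1, h2⟩ := hmem
    exact ⟨Int.ceil_le.2 (by linarith), Int.le_floor.2 (by push_cast; linarith)⟩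
  have hsummable : ∀ A : ℤ → ℝ, Summable (fun k : ℤ => κ₁ (b - k) * A k) := fun A =>
    summable_of_ne_finset_zero (s := s) (fun k hk => by rw [hzero k hk, zero_mul])
  -- integrability
  have hint1 : ∀ k : ℤ, Integrable (fun v : ℝ => h ((v + k) / c) * χ₂ v) := fun k =>
    integrable_mul_chi a χ₂ hχint hχnn hχsupp _
      (hcont.comp ((continuous_id.add continuous_const).div_const c))
  have hint2 : Integrable (fun v : ℝ => h t * χ₂ v) :=
    integrable_mul_chi a χ₂ hχint hχnn hχsupp _ continuous_const
  -- rewrite W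
  have e1 : W j κ₁ χ₂ h t = ∑' k : ℤ, κ₁ (b - k) * ∫ v : ℝ, h ((v + k) / c) * χ₂ v := by
    rw [W, ← tsum_mul_left]
    refine tsum_congr fun k => ?_
    rw [← hcdef, ← hbdef, ← mul_assoc, mul_comm c (κ₁ (b - k)), mul_assoc,
      sub_int_aux χ₂ h c hc k]
  have e2 : h t = ∑' k : ℤ, κ₁ (b - k) * ∫ v : ℝ, h t * χ₂ v := by
    have : (∫ v : ℝ, h t * χ₂ v) = h t := by
      rw [integral_const_mul, hχone, mul_one]
    rw [this, tsum_mul_right, hκsum b, one_mul]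
  have hdiff : W j κ₁ χ₂ h t - h t
      = ∑' k : ℤ, κ₁ (b - k) * ∫ v : ℝ, (h ((v + k) / c) - h t) * χ₂ v := by
    calc W j κ₁ χ₂ h t - h t
        = (∑' k : ℤ, κ₁ (b - k) * ∫ v : ℝ, h ((v + k) / c) * χ₂ v)
          - ∑' k : ℤ, κ₁ (b - k) * ∫ v : ℝ, h t * χ₂ v := by rw [e1, ← e2]
      _ = ∑' k : ℤ, (κ₁ (b - k) * (∫ v : ℝ, h ((v + k) / c) * χ₂ v)
          - κ₁ (b - k) * ∫ v : ℝ, h t * χ₂ v) := (Summable.tsum_sub (hsummable _) (hsummable _)).symm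
      _ = ∑' k : ℤ, κ₁ (b - k) * ∫ v : ℝ, (h ((v + k) / c) - h t) * χ₂ v := by
          refine tsum_congr fun k => ?_
          rw [← mul_sub, ← integral_sub (hint1 k) hint2]
          congr 1
          exact integral_congr_ae (by filter_upwards with v; ring)
  -- bound
  have key : ∀ k : ℤ, |κ₁ (b - k) * ∫ v : ℝ, (h ((v + k) / c) - h t) * χ₂ v|
      ≤ κ₁ (b - k) * (ε / 2) := by
    intro k
    by_cases hk0 : κ₁ (b - k) = 0
    · simp [hk0]
    · have hmem : b - k ∈ Set.Icc (-a) a := by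
        by_contra hmem
        exact hk0 (hκsupp _ hmem)
      rw [abs_mul, abs_of_nonneg (hκnn _)]
      refine mul_le_mul_of_nonneg_left ?_ (hκnn _)
      have hint3 : Integrable (fun v : ℝ => (h ((v + k) / c) - h t) * χ₂ v) :=
        integrable_mul_chi a χ₂ hχint hχnn hχsupp _
          ((hcont.comp ((continuous_id.add continuous_const).div_const c)).sub continuous_const)
      calc |∫ v : ℝ, (h ((v + k) / c) - h t) * χ₂ v|
          ≤ ∫ v : ℝ, |(h ((v + k) / c) - h t) * χ₂ v| := by
            simpa only [Real.norm_eq_abs] using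
              norm_integral_le_integral_norm (fun v : ℝ => (h ((v + k) / c) - h t) * χ₂ v)
        _ ≤ ∫ v : ℝ, ε / 2 * χ₂ v := by
            refine integral_mono hint3.abs (hχint.const_mul _) ?_
            · intro v
              dsimp only
              by_cases hv : v ∈ Set.Icc (-a) a
              · rw [abs_mul, abs_of_nonneg (hχnn v)]
                refine mul_le_mul_of_nonneg_right ?_ (hχnn v)
                have hdist : |(v + k) / c - t| < δ := by
                  have hval : (v + k) / c - t = (v - (b - k)) / c := by
                    rw [hbdef]; field_simp; ring
                  rw [hval, abs_div, abs_of_pos hc]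
                  refine lt_of_le_of_lt ?_ hdc
                  have hnum : |v - (b - k)| ≤ 2 * a := by
                    have h1 := abs_le.mpr ⟨(Set.mem_Icc.mp hv).1, (Set.mem_Icc.mp hv).2⟩
                    have h2 := abs_le.mpr ⟨hmem.1, hmem.2⟩
                    calc |v - (b - k)| ≤ |v| + |b - k| := abs_sub _ _
                      _ ≤ 2 * a := by linarith
                  gcongr
                have := hδ (show dist ((v + k) / c) t < δ by rwa [Real.dist_eq])
                rw [Real.dist_eq] at this
                exact le_of_lt this
              · rw [hχsupp v hv, mul_zero, mul_zero, abs_zero]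
        _ = ε / 2 := by rw [integral_const_mul, hχone, mul_one]
  have habs : |∑' k : ℤ, κ₁ (b - k) * ∫ v : ℝ, (h ((v + k) / c) - h t) * χ₂ v| ≤ ε / 2 := by
    have hsum1 : Summable (fun k : ℤ => |κ₁ (b - k) * ∫ v : ℝ, (h ((v + k) / c) - h t) * χ₂ v|) :=
      summable_of_ne_finset_zero (s := s) (fun k hk => by rw [hzero k hk, zero_mul, abs_zero])
    calc |∑' k : ℤ, κ₁ (b - k) * ∫ v : ℝ, (h ((v + k) / c) - h t) * χ₂ v|
        ≤ ∑' k : ℤ, |κ₁ (b - k) * ∫ v : ℝ, (h ((v + k) / c) - h t) * χ₂ v| := by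
          simpa only [Real.norm_eq_abs] using norm_tsum_le_tsum_norm
            (by simpa only [Real.norm_eq_abs] using hsum1 :
              Summable fun k : ℤ =>
                ‖κ₁ (b - k) * ∫ v : ℝ, (h ((v + k) / c) - h t) * χ₂ v‖)
      _ ≤ ∑' k : ℤ, κ₁ (b - k) * (ε / 2) := Summable.tsum_le_tsum key hsum1 (hsummable _)
      _ = ε / 2 := by rw [tsum_mul_right, hκsum b, one_mul]
  rw [Real.dist_eq, hdiff]
  exact lt_of_le_of_lt habs (by linarith)
end

section
/- Let a > 0, let m ≥ 1 be an integer, and let K > 0. Let κ₁ : ℝ → ℝ be bounded, vanish outside [−a, a], and satisfy, for every x ∈ ℝ, Σ_{k∈ℤ} κ₁(x − k) = 1 and Σ_{k∈ℤ} (x − k)^r κ₁(x − k) = 0 for each r = 1, …, m − 1. Let χ₂ : ℝ → ℝ be integrable, vanish outside [−a, a], and satisfy ∫_ℝ χ₂(v) dv = 1 and ∫_ℝ v^r χ₂(v) dv = 0 for each r = 1, …, m − 1. Let h : ℝ → ℝ be m times continuously differentiable with |h^{(m)}(s)| ≤ K for all s ∈ ℝ. Then for every integer j and every t ∈ ℝ,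 |(W_j h)(t) − h(t)| ≤ C · 2^{−jm}, where C = K (2a)^m C₂ ‖χ₂‖_{L¹} / m! and C₂ = sup_{x∈ℝ} Σ_{k∈ℤ} |κ₁(x − k)|. -/
open MeasureTheory

open Set


lemma itDW_eq {n : ℕ} {f : ℝ → ℝ} (hf : ContDiff ℝ n f) {s : Set ℝ}
    (hs : UniqueDiffOn ℝ s) {x : ℝ} (hx : x ∈ s) {m : ℕ} (hmn : m ≤ n) :
    iteratedDerivWithin m f s x = iteratedDeriv m f x := by
  have h0 : HasFTaylorSeriesUpTo (n : ℕ∞) f (ftaylorSeries ℝ f) :=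
    contDiff_iff_ftaylorSeries.mp hf
  have h1 : HasFTaylorSeriesUpToOn (n : ℕ∞) f (ftaylorSeries ℝ f) s :=
    (hasFTaylorSeriesUpToOn_univ_iff.mpr h0).mono (subset_univ s)
  rw [iteratedDerivWithin, iteratedDeriv,
    ← h1.eq_iteratedFDerivWithin_of_uniqueDiffOn (by exact_mod_cast hmn) hs hx,
    h0.eq_iteratedFDeriv (by exact_mod_cast hmn) x]

lemma taylor_aux {m : ℕ} (hm : 1 ≤ m) {h : ℝ → ℝ} (hh : ContDiff ℝ m h) {K : ℝ}
    (hK : ∀ s : ℝ, |iteratedDeriv m h s| ≤ K) {t y : ℝ} (hty : t < y) :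
    |h y - ∑ r ∈ Finset.range m, iteratedDeriv r h t * (y - t) ^ r / r.factorial|
      ≤ K * |y - t| ^ m / m.factorial := by
  obtain ⟨n, rfl⟩ : ∃ n, m = n + 1 := ⟨m - 1, (Nat.succ_pred_eq_of_pos hm).symm⟩
  have hud : UniqueDiffOn ℝ (Icc t y) := uniqueDiffOn_Icc hty
  have hfn : ContDiff ℝ n h := hh.of_le (by exact_mod_cast Nat.le_succ n)
  have heq : ∀ x ∈ Icc t y, iteratedDerivWithin n h (Icc t y) x = iteratedDeriv n h x :=
    fun x hx => itDW_eq hfn hud hx le_rfl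
  have hdiff : Differentiable ℝ (iteratedDeriv n h) :=
    hh.differentiable_iteratedDeriv n (by exact_mod_cast Nat.lt_succ_self n)
  obtain ⟨x', hx', hEq⟩ := taylor_mean_remainder_lagrange (f := h) (n := n) hty.ne
    (by rw [uIcc_of_le hty.le]; exact hfn.contDiffOn)
    (by
      rw [uIcc_of_le hty.le, uIoo_of_le hty.le]
      exact (hdiff.differentiableOn).congr
        (fun x hx => heq x (Ioo_subset_Icc_self hx)))
  rw [uIcc_of_le hty.le] at hEq
  rw [uIoo_of_le hty.le] at hx'
  have htay : taylorWithinEval h n (Icc t y) t y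
      = ∑ r ∈ Finset.range (n + 1), iteratedDeriv r h t * (y - t) ^ r / r.factorial := by
    rw [taylor_within_apply]
    refine Finset.sum_congr rfl fun r hr => ?_
    rw [itDW_eq hh hud (left_mem_Icc.mpr hty.le) (Finset.mem_range.mp hr).le]
    simp [smul_eq_mul]; ring
  rw [← htay, hEq, itDW_eq hh hud (Ioo_subset_Icc_self hx') le_rfl]
  rw [abs_div, abs_mul, abs_pow, abs_of_nonneg (by positivity : (0:ℝ) ≤ ((n+1).factorial : ℝ))]
  apply div_le_div_of_nonneg_right ?_ (by positivity)
  exact mul_le_mul (hK x') le_rfl (by positivity) ((abs_nonneg _).trans (hK x'))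

lemma taylor_bound {m : ℕ} (hm : 1 ≤ m) {h : ℝ → ℝ} (hh : ContDiff ℝ m h) {K : ℝ}
    (hK : ∀ s : ℝ, |iteratedDeriv m h s| ≤ K) (t y : ℝ) :
    |h y - ∑ r ∈ Finset.range m, iteratedDeriv r h t * (y - t) ^ r / r.factorial|
      ≤ K * |y - t| ^ m / m.factorial := by
  rcases lt_trichotomy t y with hty | rfl | hty
  · exact taylor_aux hm hh hK hty
  · have : ∑ r ∈ Finset.range m, iteratedDeriv r h t * (t - t) ^ r / r.factorial = h t := by
      rw [Finset.sum_eq_single 0]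
      · simp
      · intro r _ hr; simp [zero_pow hr, sub_self]
      · intro hc; exact absurd (Finset.mem_range.mpr hm) hc
    rw [this, sub_self, abs_zero, sub_self, abs_zero, zero_pow (by omega : m ≠ 0),
      mul_zero, zero_div]
  · -- reflection
    have hg : ContDiff ℝ m (fun s => h (-s)) := hh.comp (contDiff_neg)
    have hgK : ∀ s : ℝ, |iteratedDeriv m (fun x => h (-x)) s| ≤ K := by
      intro s
      rw [iteratedDeriv_comp_neg]
      rw [smul_eq_mul, abs_mul, abs_pow, abs_neg, abs_one, one_pow, one_mul]
      exact hK _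
    have := taylor_aux hm hg hgK (t := -t) (y := -y) (by linarith)
    simp only [neg_neg] at this
    have hD : ∀ r : ℕ, iteratedDeriv r (fun x => h (-x)) (-t)
        = (-1 : ℝ) ^ r * iteratedDeriv r h t := by
      intro r; rw [iteratedDeriv_comp_neg, neg_neg, smul_eq_mul]
    calc |h y - ∑ r ∈ Finset.range m, iteratedDeriv r h t * (y - t) ^ r / r.factorial|
        = |h y - ∑ r ∈ Finset.range m,
            iteratedDeriv r (fun x => h (-x)) (-t) * (-y - -t) ^ r / r.factorial| := by
          congr 2
          refine Finset.sum_congr rfl fun r _ => ?_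
          rw [hD r]
          have h2 : (-y - -t : ℝ) = (-1) * (y - t) := by ring
          rw [h2, mul_pow]
          have h1 : ((-1:ℝ) ^ r) * ((-1:ℝ) ^ r) = 1 := by rw [← mul_pow]; norm_num
          rw [show ((-1:ℝ) ^ r * iteratedDeriv r h t) * ((-1:ℝ) ^ r * (y - t) ^ r)
              = (((-1:ℝ) ^ r) * ((-1:ℝ) ^ r)) * (iteratedDeriv r h t * (y - t) ^ r) from by
            ring, h1, one_mul]
      _ ≤ K * |-y - -t| ^ m / m.factorial := this
      _ = K * |y - t| ^ m / m.factorial := by rw [(by ring : (-y - -t : ℝ) = -(y - t)), abs_neg]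

lemma integrable_cont_mul {a : ℝ} {χ₂ : ℝ → ℝ} (hχint : Integrable χ₂)
    (hχsupp : ∀ x : ℝ, x ∉ Set.Icc (-a) a → χ₂ x = 0) {φ : ℝ → ℝ} (hφ : Continuous φ) :
    Integrable (fun v => φ v * χ₂ v) := by
  obtain ⟨B, hB⟩ := (isCompact_Icc (a := -a) (b := a)).exists_bound_of_continuousOn
    hφ.continuousOn
  refine Integrable.mono' ((hχint.abs).const_mul (max B 0))
    (hφ.aestronglyMeasurable.mul hχint.1) (ae_of_all _ fun v => ?_)
  by_cases hv : v ∈ Set.Icc (-a) a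
  · rw [Real.norm_eq_abs, abs_mul]
    exact mul_le_mul ((hB v hv).trans (le_max_left _ _)) le_rfl (abs_nonneg _)
      (le_max_right _ _)
  · simp [hχsupp v hv]

theorem wavelet_kantorovich_vanishing_moments_rate
    (a : ℝ) (ha : 0 < a) (m : ℕ) (hm : 1 ≤ m) (K : ℝ) (hK : 0 < K)
    (κ₁ χ₂ h : ℝ → ℝ)
    (hκbd : ∃ M : ℝ, ∀ x : ℝ, |κ₁ x| ≤ M)
    (hκsupp : ∀ x : ℝ, x ∉ Set.Icc (-a) a → κ₁ x = 0)
    (hκsum : ∀ x : ℝ, ∑' k : ℤ, κ₁ (x - k) = 1)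
    (hκmom : ∀ x : ℝ, ∀ r ∈ Finset.Icc 1 (m - 1),
      ∑' k : ℤ, (x - (k : ℝ)) ^ r * κ₁ (x - k) = 0)
    (hχint : Integrable χ₂)
    (hχsupp : ∀ x : ℝ, x ∉ Set.Icc (-a) a → χ₂ x = 0)
    (hχone : (∫ v : ℝ, χ₂ v) = 1)
    (hχmom : ∀ r ∈ Finset.Icc 1 (m - 1), (∫ v : ℝ, v ^ r * χ₂ v) = 0)
    (hh : ContDiff ℝ m h)
    (hhbd : ∀ s : ℝ, |iteratedDeriv m h s| ≤ K)
    (j : ℤ) (t : ℝ) :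
    |W j κ₁ χ₂ h t - h t| ≤
      (K * (2 * a) ^ m * (⨆ x : ℝ, ∑' k : ℤ, |κ₁ (x - k)|) * (∫ v : ℝ, |χ₂ v|)
        / (Nat.factorial m)) * (2 : ℝ) ^ (-(j * (m : ℤ))) := by
  classical
  set c : ℝ := (2:ℝ)^j with hcdef
  have hc : 0 < c := by positivity
  have hcne : c ≠ 0 := hc.ne'
  set D : ℕ → ℝ := fun r => iteratedDeriv r h t with hDdef
  set P : ℝ → ℝ := fun y => ∑ r ∈ Finset.range m, D r * (y - t) ^ r / r.factorial with hPdef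
  have hPc : Continuous P := by
    refine continuous_finset_sum _ fun r _ => ?_
    fun_prop
  -- substitution
  have hsub : ∀ k : ℤ, (∫ u : ℝ, h u * χ₂ (c * u - k))
      = c⁻¹ * ∫ v : ℝ, h ((v + k)/c) * χ₂ v := by
    intro k
    set F : ℝ → ℝ := fun y => h ((y + k)/c) * χ₂ y with hFdef
    calc (∫ u : ℝ, h u * χ₂ (c * u - k))
        = ∫ u : ℝ, F (c * u - k) := by
          refine integral_congr_ae (ae_of_all _ fun u => ?_)
          rw [hFdef]
          dsimp only
          congr 2
          field_simp
          ring
      _ = ∫ u : ℝ, (fun x : ℝ => F (x - k)) (c * u) := rfl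
      _ = |c⁻¹| • ∫ x : ℝ, (fun x : ℝ => F (x - k)) x :=
          Measure.integral_comp_mul_left (fun x : ℝ => F (x - k)) c
      _ = c⁻¹ * ∫ v : ℝ, h ((v + k)/c) * χ₂ v := by
          simp only
          rw [integral_sub_right_eq_self F (k:ℝ), abs_of_pos (inv_pos.mpr hc), smul_eq_mul]
  -- rewrite W
  have hW : W j κ₁ χ₂ h t = ∑' k : ℤ, κ₁ (c*t - k) * ∫ v : ℝ, h ((v + k)/c) * χ₂ v := by
    rw [W, ← hcdef]
    have h2 : ∀ k : ℤ, κ₁ (c*t - k) * (∫ u : ℝ, h u * χ₂ (c*u - k))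
        = c⁻¹ * (κ₁ (c*t - k) * ∫ v : ℝ, h ((v + k)/c) * χ₂ v) := fun k => by
      rw [hsub k]; ring
    rw [tsum_congr h2, tsum_mul_left, ← mul_assoc, mul_inv_cancel₀ hcne, one_mul]
  -- finite support
  set S : Finset ℤ := Finset.Icc ⌈c*t - a⌉ ⌊c*t + a⌋ with hSdef
  have hS : ∀ k : ℤ, k ∉ S → κ₁ (c*t - k) = 0 := by
    intro k hk
    apply hκsupp
    intro hmem
    apply hk
    rw [hSdef, Finset.mem_Icc]
    obtain ⟨h1, h2⟩ := hmem
    exact ⟨Int.ceil_le.mpr (by linarith), Int.le_floor.mpr (by linarith)⟩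
  have hsummable : ∀ g : ℤ → ℝ, Summable (fun k : ℤ => κ₁ (c*t - k) * g k) := fun g =>
    summable_of_ne_finset_zero (s := S) fun k hk => by rw [hS k hk, zero_mul]
  -- integrabilities
  have hInt1 : ∀ k : ℤ, Integrable (fun v : ℝ => h ((v + (k:ℝ))/c) * χ₂ v) := fun k =>
    integrable_cont_mul hχint hχsupp (hh.continuous.comp (by fun_prop))
  have hInt2 : ∀ k : ℤ, Integrable (fun v : ℝ => P ((v + (k:ℝ))/c) * χ₂ v) := fun k =>
    integrable_cont_mul hχint hχsupp (hPc.comp (by fun_prop))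
  have hInt3 : ∀ k : ℤ, Integrable
      (fun v : ℝ => (h ((v + (k:ℝ))/c) - P ((v + (k:ℝ))/c)) * χ₂ v) := fun k => by
    have := (hInt1 k).sub (hInt2 k)
    simpa [sub_mul, Pi.sub_def] using this
  -- polynomial integral
  have hQe : ∀ k : ℤ, (∫ v : ℝ, P ((v + k)/c) * χ₂ v)
      = ∑ r ∈ Finset.range m, D r / r.factorial * (c⁻¹)^r * (-(c*t - k))^r := by
    intro k
    set w : ℝ := c*t - k with hw
    have harg : ∀ v : ℝ, (v + (k:ℝ))/c - t = (v - w) / c := by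
      intro v; rw [hw]; field_simp; ring
    have h1 : ∀ v : ℝ, P ((v + k)/c) * χ₂ v = ∑ r ∈ Finset.range m,
        ∑ s ∈ Finset.range (r+1),
          (D r / r.factorial * (c⁻¹)^r * (-w)^(r-s) * (r.choose s)) * (v^s * χ₂ v) := by
      intro v
      rw [hPdef]
      dsimp only
      rw [Finset.sum_mul]
      refine Finset.sum_congr rfl fun r _ => ?_
      have hbin : (v - w)^r
          = ∑ s ∈ Finset.range (r+1), v^s * (-w)^(r-s) * (r.choose s) := by
        rw [sub_eq_add_neg, add_pow]
      rw [harg v, div_pow, hbin, Finset.sum_div, Finset.mul_sum, Finset.sum_div,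
        Finset.sum_mul]
      refine Finset.sum_congr rfl fun s _ => ?_
      rw [inv_pow]
      field_simp
    rw [integral_congr_ae (ae_of_all _ h1)]
    have hint_s : ∀ (r s : ℕ) (C : ℝ), Integrable (fun v : ℝ => C * (v^s * χ₂ v)) :=
      fun r s C => (integrable_cont_mul hχint hχsupp (continuous_pow s)).const_mul C
    rw [integral_finset_sum _ (fun r _ => integrable_finset_sum _ (fun s _ => hint_s r s _))]
    refine Finset.sum_congr rfl fun r hr => ?_
    rw [integral_finset_sum _ (fun s _ => hint_s r s _)]
    rw [Finset.sum_eq_single_of_mem 0 (Finset.mem_range.mpr (Nat.succ_pos r))]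
    · rw [integral_const_mul]
      simp [hχone]
    · intro s hs hs0
      rw [integral_const_mul]
      have : (∫ v : ℝ, v^s * χ₂ v) = 0 := by
        refine hχmom s (Finset.mem_Icc.mpr ⟨Nat.one_le_iff_ne_zero.mpr hs0, ?_⟩)
        have hsr : s ≤ r := Nat.lt_succ_iff.mp (Finset.mem_range.mp hs)
        have hrm : r < m := Finset.mem_range.mp hr
        omega
      rw [this, mul_zero]
  -- main algebraic identity
  have hsumQ : (∑' k : ℤ, κ₁ (c*t - k) *
      ∑ r ∈ Finset.range m, D r / r.factorial * (c⁻¹)^r * (-(c*t - k))^r) = h t := by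
    have hterm : ∀ k : ℤ, κ₁ (c*t - k) *
        (∑ r ∈ Finset.range m, D r / r.factorial * (c⁻¹)^r * (-(c*t - k))^r)
        = ∑ r ∈ Finset.range m,
          (D r / r.factorial * (c⁻¹)^r * (-1)^r) * ((c*t - k)^r * κ₁ (c*t - k)) := by
      intro k
      rw [Finset.mul_sum]
      refine Finset.sum_congr rfl fun r _ => ?_
      rw [neg_pow]
      ring
    have hsumm : ∀ r ∈ Finset.range m, Summable (fun k : ℤ =>
        (D r / r.factorial * (c⁻¹)^r * (-1)^r) * ((c*t - k)^r * κ₁ (c*t - k))) := by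
      intro r _
      refine summable_of_ne_finset_zero (s := S) fun k hk => ?_
      rw [hS k hk]
      ring
    rw [tsum_congr hterm, Summable.tsum_finsetSum hsumm]
    rw [Finset.sum_eq_single_of_mem 0 (Finset.mem_range.mpr (by omega))]
    · rw [tsum_mul_left]
      have h00 : (∑' k : ℤ, (c*t - (k:ℝ))^0 * κ₁ (c*t - k)) = 1 := by
        rw [tsum_congr (fun k : ℤ => by rw [pow_zero, one_mul])]
        exact hκsum (c*t)
      rw [h00, hDdef]
      simp [iteratedDeriv_zero]
    · intro r hr hr0
      rw [tsum_mul_left]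
      have : (∑' k : ℤ, (c*t - (k:ℝ))^r * κ₁ (c*t - k)) = 0 := by
        refine hκmom (c*t) r (Finset.mem_Icc.mpr ⟨Nat.one_le_iff_ne_zero.mpr hr0, ?_⟩)
        have := Finset.mem_range.mp hr
        omega
      rw [this, mul_zero]
  set R : ℤ → ℝ := fun k => ∫ v : ℝ, (h ((v + k)/c) - P ((v + k)/c)) * χ₂ v with hRdef
  have hWh : W j κ₁ χ₂ h t - h t = ∑' k : ℤ, κ₁ (c*t - k) * R k := by
    have hsplit : ∀ k : ℤ, κ₁ (c*t - k) * (∫ v : ℝ, h ((v + k)/c) * χ₂ v)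
        = κ₁ (c*t - k) * (∑ r ∈ Finset.range m,
            D r / r.factorial * (c⁻¹)^r * (-(c*t - k))^r)
          + κ₁ (c*t - k) * R k := by
      intro k
      rw [hRdef]
      dsimp only
      rw [← hQe k, ← mul_add, ← integral_add (hInt2 k) (hInt3 k)]
      congr 1
      refine integral_congr_ae (ae_of_all _ fun v => ?_)
      ring
    have hs1 : Summable (fun k : ℤ => κ₁ (c*t - k) * (∑ r ∈ Finset.range m,
        D r / r.factorial * (c⁻¹)^r * (-(c*t - k))^r)) := hsummable _
    have hs2 : Summable (fun k : ℤ => κ₁ (c*t - k) * R k) := hsummable _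
    rw [hW, tsum_congr hsplit, Summable.tsum_add hs1 hs2, hsumQ]
    ring
  set E : ℝ := (K * (2*a)^m * (c^m)⁻¹ / m.factorial) * ∫ v : ℝ, |χ₂ v| with hEdef
  have hE0 : 0 ≤ E := by
    have : 0 ≤ ∫ v : ℝ, |χ₂ v| := integral_nonneg fun v => abs_nonneg _
    positivity
  have hRb : ∀ k : ℤ, κ₁ (c*t - k) ≠ 0 → |R k| ≤ E := by
    intro k hk
    have hwk : c*t - (k:ℝ) ∈ Icc (-a) a := by
      by_contra hmem
      exact hk (hκsupp _ hmem)
    have hpt : ∀ v : ℝ, |(h ((v + k)/c) - P ((v + k)/c)) * χ₂ v|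
        ≤ (K * (2*a)^m * (c^m)⁻¹ / m.factorial) * |χ₂ v| := by
      intro v
      by_cases hv : v ∈ Icc (-a) a
      · rw [abs_mul]
        refine mul_le_mul ?_ le_rfl (abs_nonneg _) (by positivity)
        have hPv : P ((v + k)/c) = ∑ r ∈ Finset.range m,
            iteratedDeriv r h t * ((v + (k:ℝ))/c - t)^r / r.factorial := by
          rw [hPdef, hDdef]
        rw [hPv]
        refine (taylor_bound hm hh hhbd t ((v + k)/c)).trans ?_
        have hd : |(v + (k:ℝ))/c - t| ≤ 2*a/c := by
          have harg2 : (v + (k:ℝ))/c - t = (v - (c*t - k))/c := by field_simp; ring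
          rw [harg2, abs_div, abs_of_pos hc]
          have h1 : |v| ≤ a := abs_le.mpr ⟨hv.1, hv.2⟩
          have h2 : |c*t - (k:ℝ)| ≤ a := abs_le.mpr ⟨hwk.1, hwk.2⟩
          have h3 : |v - (c*t - k)| ≤ 2*a := (abs_sub _ _).trans (by linarith)
          gcongr
          
        calc K * |(v + (k:ℝ))/c - t| ^ m / m.factorial
            ≤ K * (2*a/c) ^ m / m.factorial := by
              gcongr
              
          _ = K * (2*a)^m * (c^m)⁻¹ / m.factorial := by
              rw [div_pow]
              ring
      · rw [hχsupp v hv]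
        simp
    have hnorm : |R k| ≤ ∫ v : ℝ, |(h ((v + k)/c) - P ((v + k)/c)) * χ₂ v| := by
      rw [hRdef]
      have := norm_integral_le_integral_norm
        (fun v : ℝ => (h ((v + k)/c) - P ((v + k)/c)) * χ₂ v) (μ := volume)
      simpa only [Real.norm_eq_abs] using this
    refine hnorm.trans ?_
    calc (∫ v : ℝ, |(h ((v + k)/c) - P ((v + k)/c)) * χ₂ v|)
        ≤ ∫ v : ℝ, (K * (2*a)^m * (c^m)⁻¹ / m.factorial) * |χ₂ v| :=
          integral_mono ((hInt3 k).abs) ((hχint.abs).const_mul _) hpt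
      _ = E := by rw [integral_const_mul, hEdef]
  have hbdd : BddAbove (Set.range fun x : ℝ => ∑' k : ℤ, |κ₁ (x - k)|) := by
    obtain ⟨M, hM⟩ := hκbd
    have hM0 : 0 ≤ M := (abs_nonneg _).trans (hM 0)
    refine ⟨(2*a+1) * M, fun y hy => ?_⟩
    obtain ⟨x, rfl⟩ := hy
    dsimp only
    have hSx : ∀ k : ℤ, k ∉ Finset.Icc ⌈x - a⌉ ⌊x + a⌋ → |κ₁ (x - k)| = 0 := by
      intro k hk
      rw [hκsupp _ fun hmem => hk (Finset.mem_Icc.mpr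
        ⟨Int.ceil_le.mpr (by linarith [hmem.2]), Int.le_floor.mpr (by linarith [hmem.1])⟩),
        abs_zero]
    rw [tsum_eq_sum hSx]
    have hcard : ((Finset.Icc ⌈x - a⌉ ⌊x + a⌋).card : ℝ) ≤ 2*a + 1 := by
      rw [Int.card_Icc]
      rcases le_or_gt (⌊x + a⌋ + 1 - ⌈x - a⌉) 0 with hz | hz
      · rw [Int.toNat_of_nonpos hz]
        norm_num
        linarith
      · have hcast : (((⌊x + a⌋ + 1 - ⌈x - a⌉).toNat : ℕ) : ℝ)
            = ((⌊x + a⌋ : ℝ) + 1 - ⌈x - a⌉) := by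
          rw [← Int.cast_natCast, Int.toNat_of_nonneg hz.le]
          push_cast
          ring
        rw [hcast]
        have h1 : (⌊x + a⌋ : ℝ) ≤ x + a := Int.floor_le _
        have h2 : (x - a : ℝ) ≤ ⌈x - a⌉ := Int.le_ceil _
        linarith
    calc (∑ k ∈ Finset.Icc ⌈x - a⌉ ⌊x + a⌋, |κ₁ (x - k)|)
        ≤ (Finset.Icc ⌈x - a⌉ ⌊x + a⌋).card • M :=
          Finset.sum_le_card_nsmul _ _ M (fun k _ => hM _)
      _ = ((Finset.Icc ⌈x - a⌉ ⌊x + a⌋).card : ℝ) * M := nsmul_eq_mul _ _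
      _ ≤ (2*a+1) * M := mul_le_mul_of_nonneg_right hcard hM0
  have hsup0 : (0:ℝ) ≤ ⨆ x : ℝ, ∑' k : ℤ, |κ₁ (x - k)| :=
    le_trans (tsum_nonneg fun k => abs_nonneg _) (le_ciSup hbdd (c*t))
  have hfinal : |∑' k : ℤ, κ₁ (c*t - k) * R k|
      ≤ (⨆ x : ℝ, ∑' k : ℤ, |κ₁ (x - k)|) * E := by
    have h1 : (∑' k : ℤ, κ₁ (c*t - k) * R k) = ∑ k ∈ S, κ₁ (c*t - k) * R k :=
      tsum_eq_sum (fun k hk => by rw [hS k hk, zero_mul])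
    have h3 : ∀ k ∈ S, |κ₁ (c*t - k) * R k| ≤ |κ₁ (c*t - k)| * E := by
      intro k _
      rw [abs_mul]
      by_cases hk0 : κ₁ (c*t - k) = 0
      · simp [hk0]
      · exact mul_le_mul_of_nonneg_left (hRb k hk0) (abs_nonneg _)
    calc |∑' k : ℤ, κ₁ (c*t - k) * R k|
        = |∑ k ∈ S, κ₁ (c*t - k) * R k| := by rw [h1]
      _ ≤ ∑ k ∈ S, |κ₁ (c*t - k) * R k| := Finset.abs_sum_le_sum_abs _ _
      _ ≤ ∑ k ∈ S, |κ₁ (c*t - k)| * E := Finset.sum_le_sum h3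
      _ = (∑ k ∈ S, |κ₁ (c*t - k)|) * E := (Finset.sum_mul _ _ _).symm
      _ = (∑' k : ℤ, |κ₁ (c*t - k)|) * E := by
          rw [tsum_eq_sum (f := fun k : ℤ => |κ₁ (c*t - k)|)
            (fun k hk => by simp [hS k hk])]
      _ ≤ (⨆ x : ℝ, ∑' k : ℤ, |κ₁ (x - k)|) * E :=
          mul_le_mul_of_nonneg_right (le_ciSup hbdd (c*t)) hE0
  rw [hWh]
  refine hfinal.trans (le_of_eq ?_)
  have hpow : (2:ℝ) ^ (-(j * (m:ℤ))) = (c^m)⁻¹ := by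
    rw [zpow_neg, zpow_mul, zpow_natCast]
  rw [hpow, hEdef]
  ring
end

section
/- Let J ∈ ℤ and k ∈ ℤ. Let f : ℝ → ℂ be continuous with f ∈ L¹(ℝ) ∩ L²(ℝ) and f̂ ∈ L¹(ℝ), and let χ : ℝ → ℝ be real-valued with χ ∈ L¹(ℝ) ∩ L²(ℝ). Set c_{Jk} = 2^{J/2} ∫_ℝ f(t) χ(2^J t − k) dt. Then c_{Jk} − 2^{−J/2} f(k/2^J) = (2^{J/2}/(2π)) ∫_ℝ f̂(−2^J ω)(χ̂(ω) − 1) e^{−ikω} dω. -/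
open MeasureTheory Real

/-- The Fourier transform with the normalization `f̂(ω) = ∫_ℝ f(t) e^{−iωt} dt`. -/
noncomputable def ft (f : ℝ → ℂ) (ω : ℝ) : ℂ :=
  ∫ t : ℝ, f t * Complex.exp (-(Complex.I) * ω * t)

open Complex
open scoped FourierTransform

lemma ft_eq (f : ℝ → ℂ) (ω : ℝ) : ft f ω = 𝓕 f (ω / (2 * π)) := by
  rw [Real.fourier_real_eq]
  unfold ft
  congr 1
  ext v
  rw [Circle.smul_def, Real.fourierChar_apply, mul_comm]
  have hπ : (π : ℝ) ≠ 0 := Real.pi_ne_zero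
  have hexp : (-(Complex.I) * (ω : ℂ) * (v : ℂ))
      = ((2 * π * -(v * (ω / (2 * π))) : ℝ) : ℂ) * Complex.I := by
    have hπC : (π : ℂ) ≠ 0 := by exact_mod_cast hπ
    push_cast
    field_simp
  rw [hexp, smul_eq_mul]

lemma ft_continuous {f : ℝ → ℂ} (hf : Integrable f) : Continuous (ft f) := by
  have h : Continuous (𝓕 f) := by
    apply VectorFourier.fourierIntegral_continuous Real.continuous_fourierChar
      (by simp only [LinearMap.neg_apply, innerₗ_apply_apply, RCLike.inner_apply, conj_trivial]
          fun_prop) hf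
  have : ft f = fun ω => 𝓕 f (ω / (2 * π)) := funext fun ω => ft_eq f ω
  rw [this]
  exact h.comp (continuous_id.div_const _)

lemma ft_inversion {f : ℝ → ℂ} (hfc : Continuous f) (hf1 : Integrable f)
    (hfhat : Integrable (ft f)) (x : ℝ) :
    ∫ ω : ℝ, ft f ω * Complex.exp (Complex.I * x * ω) = ((2 * π : ℝ) : ℂ) * f x := by
  have h2π : (2 * π : ℝ) ≠ 0 := by positivity
  have h𝓕 : Integrable (𝓕 f) := by
    have h1 : 𝓕 f = fun w : ℝ => ft f ((2 * π) • w) := by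
      ext w
      rw [ft_eq]
      congr 1
      rw [smul_eq_mul]
      field_simp
    rw [h1]
    exact (integrable_comp_smul_iff volume (ft f) h2π).2 hfhat
  have hinv : 𝓕⁻ (𝓕 f) x = f x := hf1.fourierInv_fourier_eq h𝓕 hfc.continuousAt
  set G : ℝ → ℂ := fun v => 𝓕 f v * Complex.exp (Complex.I * x * (2 * π * v)) with hG
  have h1 : ∀ ω : ℝ, ft f ω * Complex.exp (Complex.I * x * ω) = G (ω / (2 * π)) := by
    intro ω
    rw [hG]
    simp only
    rw [ft_eq]
    congr 2
    have hc : ((2 * π : ℝ) : ℂ) ≠ 0 := by exact_mod_cast h2π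
    push_cast
    push_cast at hc
    field_simp
  calc ∫ ω : ℝ, ft f ω * Complex.exp (Complex.I * x * ω) = ∫ ω : ℝ, G (ω / (2 * π)) := by
        simp_rw [h1]
    _ = |(2 * π : ℝ)| • ∫ v, G v := MeasureTheory.Measure.integral_comp_div G (2 * π)
    _ = ((2 * π : ℝ) : ℂ) * (𝓕⁻ (𝓕 f) x) := by
        rw [Real.fourierInv_eq', abs_of_pos (by positivity : (0:ℝ) < 2 * π)]
        rw [show ((2 * π : ℝ)) • (∫ v, G v) = ((2 * π : ℝ) : ℂ) * ∫ v, G v from by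
          rw [real_smul]]
        congr 1
        refine integral_congr_ae (Filter.Eventually.of_forall fun v => ?_)
        rw [hG]
        simp only [RCLike.inner_apply, conj_trivial, smul_eq_mul]
        rw [mul_comm]
        congr 1
        push_cast
        ring
    _ = ((2 * π : ℝ) : ℂ) * f x := by rw [hinv]

lemma key_sub {f : ℝ → ℂ} (hfc : Continuous f) (hf1 : Integrable f) (hfhat : Integrable (ft f))
    {a : ℝ} (ha : 0 < a) (b : ℝ) :
    ∫ ω : ℝ, ft f (-a * ω) * Complex.exp (-(Complex.I) * b * ω)
      = ((2 * π / a : ℝ) : ℂ) * f (b / a) := by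
  have haC : (a : ℂ) ≠ 0 := by exact_mod_cast ha.ne'
  set H : ℝ → ℂ := fun u => ft f u * Complex.exp (Complex.I * ((b / a : ℝ) : ℂ) * u) with hH
  have h1 : ∀ ω : ℝ, ft f (-a * ω) * Complex.exp (-(Complex.I) * b * ω) = H (-a * ω) := by
    intro ω
    rw [hH]
    simp only
    congr 2
    push_cast
    field_simp
  calc ∫ ω : ℝ, ft f (-a * ω) * Complex.exp (-(Complex.I) * b * ω)
      = ∫ ω : ℝ, H (-a * ω) := by simp_rw [h1]
    _ = |(-a)⁻¹| • ∫ u, H u := MeasureTheory.Measure.integral_comp_mul_left H (-a)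
    _ = ((2 * π / a : ℝ) : ℂ) * f (b / a) := by
        rw [hH]
        rw [ft_inversion hfc hf1 hfhat (b / a)]
        rw [abs_inv, abs_neg, abs_of_pos ha, real_smul]
        push_cast
        field_simp

theorem scaling_coefficient_sample_difference
    (J : ℤ) (k : ℤ) (f : ℝ → ℂ) (χ : ℝ → ℝ)
    (hfc : Continuous f)
    (hf1 : Integrable f)
    (hf2 : MemLp f 2 (volume : Measure ℝ))
    (hfhat : Integrable (ft f))
    (hχ1 : Integrable χ)
    (hχ2 : MemLp χ 2 (volume : Measure ℝ)) :
    (((2 : ℝ) ^ ((J : ℝ) / 2) : ℝ) : ℂ) * (∫ t : ℝ, f t * (χ ((2 : ℝ) ^ J * t - k) : ℂ))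
        - (((2 : ℝ) ^ (-(J : ℝ) / 2) : ℝ) : ℂ) * f ((k : ℝ) / (2 : ℝ) ^ J) =
      (((2 : ℝ) ^ ((J : ℝ) / 2) / (2 * π) : ℝ) : ℂ) *
        ∫ ω : ℝ, ft f (-(2 : ℝ) ^ J * ω) * (ft (fun x : ℝ => (χ x : ℂ)) ω - 1) *
          Complex.exp (-(Complex.I) * k * ω) := by
  set a : ℝ := (2 : ℝ) ^ J with haa
  have ha : 0 < a := by positivity
  have ha' : a ≠ 0 := ha.ne'
  have haC : (a : ℂ) ≠ 0 := by exact_mod_cast ha'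
  set χc : ℝ → ℂ := fun x => (χ x : ℂ) with hχc
  have hχcI : Integrable χc := hχ1.ofReal
  have hg : Integrable (fun ω : ℝ => ft f (-a * ω)) := by
    have := (integrable_comp_smul_iff volume (ft f)
      (show (-a) ≠ 0 by simpa using ha')).2 hfhat
    simpa [smul_eq_mul] using this
  have hftf_cont : Continuous (ft f) := ft_continuous hf1
  have hftχ_cont : Continuous (ft χc) := ft_continuous hχcI
  have hexp : ∀ (c ω : ℝ), ‖Complex.exp (-(Complex.I) * c * ω)‖ = 1 := by
    intro c ω
    rw [show -(Complex.I) * (c : ℂ) * (ω : ℂ) = ((-(c * ω) : ℝ) : ℂ) * Complex.I by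
      push_cast; ring]
    exact Complex.norm_exp_ofReal_mul_I _
  have hftχ_bdd : ∀ ω, ‖ft χc ω‖ ≤ ∫ s, ‖χc s‖ := by
    intro ω
    rw [ft_eq]
    exact VectorFourier.norm_fourierIntegral_le_integral_norm _ _ _ _ _
  have key : ∀ b : ℝ, ∫ ω : ℝ, ft f (-a * ω) * Complex.exp (-(Complex.I) * b * ω)
      = ((2 * π / a : ℝ) : ℂ) * f (b / a) := key_sub hfc hf1 hfhat ha
  -- Fubini for the main term
  set F : ℝ × ℝ → ℂ := fun p =>
    χc p.2 * (ft f (-a * p.1) * Complex.exp (-(Complex.I) * ((p.2 + (k : ℝ) : ℝ) : ℂ) * p.1))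
    with hF
  have hFmeas : AEStronglyMeasurable F (volume.prod volume) := by
    apply AEStronglyMeasurable.mul
    · exact hχcI.aestronglyMeasurable.comp_snd
    · apply Continuous.aestronglyMeasurable
      apply Continuous.mul
      · exact hftf_cont.comp (continuous_const.mul continuous_fst)
      · apply Complex.continuous_exp.comp
        fun_prop
  have hFint : Integrable F (volume.prod volume) := by
    refine Integrable.mono' (hg.norm.mul_prod hχ1.norm) hFmeas
      (Filter.Eventually.of_forall fun p => ?_)
    rw [hF]
    simp only
    rw [norm_mul, norm_mul, hexp, mul_one]
    rw [show ‖χc p.2‖ = ‖χ p.2‖ from by rw [hχc]; exact Complex.norm_real _]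
    exact le_of_eq (mul_comm _ _)
  have hT1 : ∫ ω : ℝ, ft f (-a * ω) * ft χc ω * Complex.exp (-(Complex.I) * ((k : ℝ) : ℂ) * ω)
      = ((2 * π / a : ℝ) : ℂ) * ∫ s : ℝ, χc s * f ((s + k) / a) := by
    have step1 : ∀ ω : ℝ, ft f (-a * ω) * ft χc ω *
        Complex.exp (-(Complex.I) * ((k : ℝ) : ℂ) * ω) = ∫ s : ℝ, F (ω, s) := by
      intro ω
      rw [show ft f (-a * ω) * ft χc ω * Complex.exp (-(Complex.I) * ((k : ℝ) : ℂ) * ω)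
        = ft χc ω * (ft f (-a * ω) * Complex.exp (-(Complex.I) * ((k : ℝ) : ℂ) * ω)) from by
          ring]
      rw [show ft χc ω = ∫ s : ℝ, χc s * Complex.exp (-(Complex.I) * ω * s) from rfl]
      rw [← integral_mul_const]
      refine integral_congr_ae (Filter.Eventually.of_forall fun s => ?_)
      rw [hF]
      simp only
      have hee : Complex.exp (-(Complex.I) * (ω : ℂ) * (s : ℂ)) *
          Complex.exp (-(Complex.I) * ((k : ℝ) : ℂ) * (ω : ℂ))
          = Complex.exp (-(Complex.I) * ((s + (k : ℝ) : ℝ) : ℂ) * (ω : ℂ)) := by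
        rw [← Complex.exp_add]
        congr 1
        push_cast
        ring
      calc χc s * Complex.exp (-(Complex.I) * (ω : ℂ) * s) *
            (ft f (-a * ω) * Complex.exp (-(Complex.I) * ((k : ℝ) : ℂ) * ω))
          = χc s * (ft f (-a * ω) * (Complex.exp (-(Complex.I) * (ω : ℂ) * s) *
              Complex.exp (-(Complex.I) * ((k : ℝ) : ℂ) * ω))) := by ring
        _ = _ := by rw [hee]
    simp_rw [step1]
    rw [integral_integral_swap hFint]
    have step2 : ∀ s : ℝ, ∫ ω : ℝ, F (ω, s)
        = χc s * (((2 * π / a : ℝ) : ℂ) * f ((s + k) / a)) := by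
      intro s
      rw [hF]
      simp only
      rw [integral_const_mul, key (s + (k : ℝ))]
    simp_rw [step2]
    rw [← integral_const_mul]
    refine integral_congr_ae (Filter.Eventually.of_forall fun s => ?_)
    ring
  -- change of variables in the scaling-coefficient integral
  have hA : ∫ t : ℝ, f t * (χ (a * t - k) : ℂ)
      = ((a⁻¹ : ℝ) : ℂ) * ∫ s : ℝ, χc s * f ((s + k) / a) := by
    set Φ : ℝ → ℂ := fun u => χc u * f ((u + k) / a) with hΦ
    have h1 : ∀ t : ℝ, f t * (χ (a * t - k) : ℂ) = (fun u => Φ (u - (k : ℝ))) (a * t) := by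
      intro t
      rw [hΦ]
      simp only
      rw [show a * t - (k : ℝ) + (k : ℝ) = a * t from by ring]
      rw [show a * t / a = t from by field_simp]
      rw [hχc]
      ring
    simp_rw [h1]
    rw [MeasureTheory.Measure.integral_comp_mul_left (fun u => Φ (u - (k : ℝ))) a]
    rw [integral_sub_right_eq_self Φ ((k : ℝ))]
    rw [abs_inv, abs_of_pos ha, real_smul]
  -- splitting the right-hand side integral
  have hb1 : Integrable (fun ω : ℝ => ft f (-a * ω) * ft χc ω *
      Complex.exp (-(Complex.I) * ((k : ℝ) : ℂ) * ω)) := by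
    have hbb : ∃ C, ∀ ω : ℝ, ‖ft χc ω * Complex.exp (-(Complex.I) * ((k : ℝ) : ℂ) * ω)‖ ≤ C :=
      ⟨∫ s, ‖χc s‖, fun ω => by rw [norm_mul, hexp, mul_one]; exact hftχ_bdd ω⟩
    have hexpc : Continuous fun ω : ℝ => Complex.exp (-(Complex.I) * ((k : ℝ) : ℂ) * ω) :=
      Complex.continuous_exp.comp (by fun_prop)
    have := Integrable.bdd_mul (c := hbb.choose) hg ((hftχ_cont.mul hexpc).aestronglyMeasurable) (Filter.Eventually.of_forall hbb.choose_spec)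
    exact this.congr (Filter.Eventually.of_forall fun ω => by simp only [Pi.mul_apply]; ring)
  have hb2 : Integrable (fun ω : ℝ => ft f (-a * ω) *
      Complex.exp (-(Complex.I) * ((k : ℝ) : ℂ) * ω)) := by
    have hbb : ∃ C, ∀ ω : ℝ, ‖Complex.exp (-(Complex.I) * ((k : ℝ) : ℂ) * ω)‖ ≤ C :=
      ⟨1, fun ω => le_of_eq (hexp _ _)⟩
    have hexpc : Continuous fun ω : ℝ => Complex.exp (-(Complex.I) * ((k : ℝ) : ℂ) * ω) :=
      Complex.continuous_exp.comp (by fun_prop)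
    have := Integrable.bdd_mul (c := hbb.choose) hg hexpc.aestronglyMeasurable (Filter.Eventually.of_forall hbb.choose_spec)
    exact this.congr (Filter.Eventually.of_forall fun ω => by ring)
  have hsplit : ∫ ω : ℝ, ft f (-a * ω) * (ft χc ω - 1) *
        Complex.exp (-(Complex.I) * ((k : ℝ) : ℂ) * ω)
      = (∫ ω : ℝ, ft f (-a * ω) * ft χc ω * Complex.exp (-(Complex.I) * ((k : ℝ) : ℂ) * ω))
        - ∫ ω : ℝ, ft f (-a * ω) * Complex.exp (-(Complex.I) * ((k : ℝ) : ℂ) * ω) := by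
    rw [← integral_sub hb1 hb2]
    refine integral_congr_ae (Filter.Eventually.of_forall fun ω => ?_)
    ring
  -- finish
  have hgoalint : ∫ ω : ℝ, ft f (-a * ω) * (ft χc ω - 1) *
        Complex.exp (-(Complex.I) * (k : ℂ) * ω)
      = ∫ ω : ℝ, ft f (-a * ω) * (ft χc ω - 1) *
        Complex.exp (-(Complex.I) * ((k : ℝ) : ℂ) * ω) := by
    refine integral_congr_ae (Filter.Eventually.of_forall fun ω => ?_)
    norm_num
  rw [hA, hgoalint, hsplit, hT1, key ((k : ℝ))]
  have hpow : ((2 : ℝ) ^ ((J : ℝ) / 2)) * a⁻¹ = (2 : ℝ) ^ (-(J : ℝ) / 2) := by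
    rw [haa, ← Real.rpow_intCast 2 J, ← Real.rpow_neg (by norm_num),
      ← Real.rpow_add (by norm_num)]
    congr 1
    ring
  have h2π : (2 * π : ℝ) ≠ 0 := by positivity
  set S : ℂ := ∫ s : ℝ, χc s * f ((s + k) / a) with hS
  set v : ℂ := f ((k : ℝ) / a) with hv
  have hd : ((2 : ℝ) ^ ((J : ℝ) / 2) / (2 * π)) * (2 * π / a) = (2 : ℝ) ^ (-(J : ℝ) / 2) := by
    rw [← hpow]
    field_simp
  rw [show (((2 : ℝ) ^ ((J : ℝ) / 2) / (2 * π) : ℝ) : ℂ) *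
        (((2 * π / a : ℝ) : ℂ) * S - ((2 * π / a : ℝ) : ℂ) * v)
      = ((((2 : ℝ) ^ ((J : ℝ) / 2) / (2 * π)) * (2 * π / a) : ℝ) : ℂ) * (S - v) from by
    push_cast; ring]
  rw [hd]
  rw [show (((2 : ℝ) ^ ((J : ℝ) / 2) : ℝ) : ℂ) * (((a⁻¹ : ℝ) : ℂ) * S)
      = ((((2 : ℝ) ^ ((J : ℝ) / 2)) * a⁻¹ : ℝ) : ℂ) * S from by push_cast; ring]
  rw [hpow]
  ring
end

section
/- Let a > 0 and let j be an integer. Let h : ℝ → ℝ be bounded, measurable, and uniformly continuous. Let κ₁ : ℝ → ℝ be bounded, nonnegative, vanish outside [−a, a], and satisfy Σ_{k∈ℤ} κ₁(x − k) = 1 for all x ∈ ℝ. Let χ₂ : ℝ → ℝ be integrable, nonnegative, vanish outside [−a, a], with ∫_ℝ χ₂(v) dv = 1. Then for every t ∈ ℝ, |(W_j h)(t) − h(t)| ≤ ω(h, 2a/2^j). -/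
open MeasureTheory

lemma modCont_bound (g : ℝ → ℝ) (δ : ℝ) (M : ℝ) (hM : ∀ x, |g x| ≤ M)
    {x y : ℝ} (hxy : |x - y| ≤ δ) : |g x - g y| ≤ modCont g δ := by
  apply le_csSup
  · refine ⟨2 * M, ?_⟩
    rintro d ⟨u, v, -, rfl⟩
    calc |g u - g v| ≤ |g u| + |g v| := abs_sub _ _
      _ ≤ M + M := add_le_add (hM u) (hM v)
      _ = 2 * M := by ring
  · exact ⟨x, y, hxy, rfl⟩

theorem wavelet_kantorovich_modulus_estimate
    (a : ℝ) (ha : 0 < a) (j : ℤ)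
    (h κ₁ χ₂ : ℝ → ℝ)
    (hhbd : ∃ M : ℝ, ∀ x : ℝ, |h x| ≤ M)
    (hhmeas : Measurable h)
    (hhuc : UniformContinuous h)
    (hκbd : ∃ M : ℝ, ∀ x : ℝ, |κ₁ x| ≤ M)
    (hκnn : ∀ x : ℝ, 0 ≤ κ₁ x)
    (hκsupp : ∀ x : ℝ, x ∉ Set.Icc (-a) a → κ₁ x = 0)
    (hκsum : ∀ x : ℝ, ∑' k : ℤ, κ₁ (x - k) = 1)
    (hχint : Integrable χ₂)
    (hχnn : ∀ x : ℝ, 0 ≤ χ₂ x)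
    (hχsupp : ∀ x : ℝ, x ∉ Set.Icc (-a) a → χ₂ x = 0)
    (hχone : (∫ v : ℝ, χ₂ v) = 1)
    (t : ℝ) :
    |W j κ₁ χ₂ h t - h t| ≤ modCont h (2 * a / (2 : ℝ) ^ j) := by
  obtain ⟨M, hM⟩ := hhbd
  set c : ℝ := (2 : ℝ) ^ j with hcdef
  have hc : 0 < c := zpow_pos (by norm_num) j
  set δ : ℝ := 2 * a / c with hδdef
  have hδpos : 0 < δ := by positivity
  set ω : ℝ := modCont h δ with hωdef
  have hωnn : 0 ≤ ω := by
    have := modCont_bound h δ M hM (x := t) (y := t) (by simp [le_of_lt hδpos])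
    simpa using le_trans (abs_nonneg _) this
  -- integrability of the shifted-dilated kernel
  have χk_int : ∀ k : ℤ, Integrable (fun u : ℝ => χ₂ (c * u - (k : ℝ))) := by
    intro k
    have h1 : Integrable (fun v : ℝ => χ₂ (v - (k : ℝ))) := hχint.comp_sub_right _
    exact h1.comp_mul_left' hc.ne'
  have χk_integral : ∀ k : ℤ, (∫ u : ℝ, χ₂ (c * u - (k : ℝ))) = c⁻¹ := by
    intro k
    have h1 : (∫ u : ℝ, χ₂ (c * u - (k : ℝ)))
        = |c⁻¹| • ∫ v : ℝ, χ₂ (v - (k : ℝ)) :=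
      Measure.integral_comp_mul_left (fun v => χ₂ (v - (k : ℝ))) c
    rw [h1, integral_sub_right_eq_self χ₂ ((k : ℝ)), hχone,
      abs_of_pos (inv_pos.mpr hc)]
    simp
  have hint : ∀ k : ℤ, Integrable (fun u : ℝ => h u * χ₂ (c * u - (k : ℝ))) := by
    intro k
    exact (χk_int k).bdd_mul hhmeas.aestronglyMeasurable (c := M) (Filter.Eventually.of_forall fun x => by rw [Real.norm_eq_abs]; exact hM x)
  -- key per-index bound
  have key : ∀ k : ℤ, |c * t - (k : ℝ)| ≤ a →
      |c * (∫ u : ℝ, h u * χ₂ (c * u - (k : ℝ))) - h t| ≤ ω := by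
    intro k hk
    have hconst : Integrable (fun u : ℝ => h t * χ₂ (c * u - (k : ℝ))) :=
      (χk_int k).const_mul (h t)
    have e1 : c * (∫ u : ℝ, h u * χ₂ (c * u - (k : ℝ))) - h t
        = c * ∫ u : ℝ, (h u - h t) * χ₂ (c * u - (k : ℝ)) := by
      have : (∫ u : ℝ, (h u - h t) * χ₂ (c * u - (k : ℝ)))
          = (∫ u : ℝ, h u * χ₂ (c * u - (k : ℝ)))
            - (∫ u : ℝ, h t * χ₂ (c * u - (k : ℝ))) := by
        rw [← integral_sub (hint k) hconst]
        congr 1; ext u; ring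
      rw [this, integral_const_mul, χk_integral k]
      field_simp
    rw [e1]
    have fint : Integrable (fun u : ℝ => (h u - h t) * χ₂ (c * u - (k : ℝ))) := by
      have := (hint k).sub hconst
      exact this.congr (Filter.Eventually.of_forall fun u => by simp [sub_mul])
    have pw : ∀ u : ℝ, |(h u - h t) * χ₂ (c * u - (k : ℝ))|
        ≤ ω * χ₂ (c * u - (k : ℝ)) := by
      intro u
      by_cases hu : c * u - (k : ℝ) ∈ Set.Icc (-a) a
      · have hua : |c * u - (k : ℝ)| ≤ a := abs_le.mpr ⟨hu.1, hu.2⟩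
        have hut : |u - t| ≤ δ := by
          have : |u - t| = |c * u - c * t| / c := by
            rw [← mul_sub, abs_mul, abs_of_pos hc]
            field_simp
          rw [this, hδdef, div_le_div_iff_of_pos_right hc]
          calc |c * u - c * t| = |(c * u - (k : ℝ)) - (c * t - (k : ℝ))| := by ring_nf
            _ ≤ |c * u - (k : ℝ)| + |c * t - (k : ℝ)| := abs_sub _ _
            _ ≤ a + a := add_le_add hua hk
            _ = 2 * a := by ring
        rw [abs_mul, abs_of_nonneg (hχnn _)]
        exact mul_le_mul_of_nonneg_right (modCont_bound h δ M hM hut) (hχnn _)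
      · rw [hχsupp _ hu]; simp
    calc |c * ∫ u : ℝ, (h u - h t) * χ₂ (c * u - (k : ℝ))|
        = c * |∫ u : ℝ, (h u - h t) * χ₂ (c * u - (k : ℝ))| := by
          rw [abs_mul, abs_of_pos hc]
      _ ≤ c * ∫ u : ℝ, |(h u - h t) * χ₂ (c * u - (k : ℝ))| := by
          apply mul_le_mul_of_nonneg_left _ hc.le
          simpa only [Real.norm_eq_abs] using
            norm_integral_le_integral_norm (μ := volume)
              (fun u : ℝ => (h u - h t) * χ₂ (c * u - (k : ℝ)))
      _ ≤ c * ∫ u : ℝ, ω * χ₂ (c * u - (k : ℝ)) := by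
          apply mul_le_mul_of_nonneg_left _ hc.le
          exact integral_mono fint.abs ((χk_int k).const_mul ω) pw
      _ = ω := by rw [integral_const_mul, χk_integral k]; field_simp
  -- summability facts
  have sumκ : Summable (fun k : ℤ => κ₁ (c * t - (k : ℝ))) := by
    by_contra hs
    have := tsum_eq_zero_of_not_summable hs
    rw [hκsum (c * t)] at this
    norm_num at this
  have Fbd : ∀ k : ℤ, |κ₁ (c * t - (k : ℝ)) *
      (c * (∫ u : ℝ, h u * χ₂ (c * u - (k : ℝ))) - h t)| ≤ κ₁ (c * t - (k : ℝ)) * ω := by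
    intro k
    by_cases hk : c * t - (k : ℝ) ∈ Set.Icc (-a) a
    · rw [abs_mul, abs_of_nonneg (hκnn _)]
      exact mul_le_mul_of_nonneg_left (key k (abs_le.mpr ⟨hk.1, hk.2⟩)) (hκnn _)
    · simp [hκsupp _ hk, mul_nonneg (hκnn _) hωnn]
  have sumbound : Summable (fun k : ℤ => κ₁ (c * t - (k : ℝ)) * ω) :=
    sumκ.mul_right ω
  have sumF : Summable (fun k : ℤ => κ₁ (c * t - (k : ℝ)) *
      (c * (∫ u : ℝ, h u * χ₂ (c * u - (k : ℝ))) - h t)) :=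
    Summable.of_norm_bounded sumbound (fun k => by
      rw [Real.norm_eq_abs]; exact Fbd k)
  have sumG : Summable (fun k : ℤ => κ₁ (c * t - (k : ℝ)) * h t) :=
    sumκ.mul_right (h t)
  have sumH : Summable (fun k : ℤ => κ₁ (c * t - (k : ℝ)) *
      (c * ∫ u : ℝ, h u * χ₂ (c * u - (k : ℝ)))) :=
    (sumF.add sumG).congr (fun k => by ring)
  have sumI : Summable (fun k : ℤ => κ₁ (c * t - (k : ℝ)) *
      ∫ u : ℝ, h u * χ₂ (c * u - (k : ℝ))) :=
    (sumH.mul_left c⁻¹).congr (fun k => by field_simp)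
  -- identify W − h t with the centered sum
  have e0 : W j κ₁ χ₂ h t = c * ∑' k : ℤ, κ₁ (c * t - (k : ℝ)) *
      ∫ u : ℝ, h u * χ₂ (c * u - (k : ℝ)) := rfl
  have e2 : c * (∑' k : ℤ, κ₁ (c * t - (k : ℝ)) *
      ∫ u : ℝ, h u * χ₂ (c * u - (k : ℝ)))
      = ∑' k : ℤ, κ₁ (c * t - (k : ℝ)) *
        (c * ∫ u : ℝ, h u * χ₂ (c * u - (k : ℝ))) := by
    rw [← tsum_mul_left]
    exact tsum_congr fun k => by ring
  have e3 : h t = ∑' k : ℤ, κ₁ (c * t - (k : ℝ)) * h t := by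
    rw [tsum_mul_right, hκsum (c * t), one_mul]
  have eWF : W j κ₁ χ₂ h t - h t = ∑' k : ℤ, κ₁ (c * t - (k : ℝ)) *
      (c * (∫ u : ℝ, h u * χ₂ (c * u - (k : ℝ))) - h t) := by
    rw [e0, e2]
    nth_rewrite 1 [e3]
    rw [← Summable.tsum_sub sumH sumG]
    exact tsum_congr fun k => by ring
  rw [eWF]
  have sumFn : Summable (fun k : ℤ => |κ₁ (c * t - (k : ℝ)) *
      (c * (∫ u : ℝ, h u * χ₂ (c * u - (k : ℝ))) - h t)|) :=
    Summable.of_nonneg_of_le (fun k => abs_nonneg _) Fbd sumbound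
  calc |∑' k : ℤ, κ₁ (c * t - (k : ℝ)) *
        (c * (∫ u : ℝ, h u * χ₂ (c * u - (k : ℝ))) - h t)|
      ≤ ∑' k : ℤ, |κ₁ (c * t - (k : ℝ)) *
        (c * (∫ u : ℝ, h u * χ₂ (c * u - (k : ℝ))) - h t)| := by
        simpa only [Real.norm_eq_abs] using norm_tsum_le_tsum_norm
          (f := fun k : ℤ => κ₁ (c * t - (k : ℝ)) *
            (c * (∫ u : ℝ, h u * χ₂ (c * u - (k : ℝ))) - h t))
          (by simpa only [Real.norm_eq_abs] using sumFn)
    _ ≤ ∑' k : ℤ, κ₁ (c * t - (k : ℝ)) * ω := Summable.tsum_le_tsum Fbd sumFn sumbound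
    _ = (∑' k : ℤ, κ₁ (c * t - (k : ℝ))) * ω := tsum_mul_right
    _ = ω := by rw [hκsum (c * t), one_mul]
end
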